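/- Let M be a 3-connected matroid and let F be a fan of M of length |F| ≥ 3 with fan ordering (e_1, …, e_{|F|}), such that |E(M)| ≥ |F| + 2. If {e_1, e_2, e_3} is a triangle, then r(F) = ⌊|F|/2⌋ + 1 and r*(F) = ⌈|F|/2⌉ + 1; if {e_1, e_2, e_3} is a triad, then r(F) = ⌈|F|/2⌉ + 1 and r*(F) = ⌊|F|/2⌋ + 1. In both cases λ(F) = 2. -/

import Mathlib

open Matroid Set

namespace DetPairs

variable {α : Type*}

/-- The rank of a set in a matroid: the maximum size of an independent subset
(as an integer, for convenient arithmetic). -/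
noncomputable def r (M : Matroid α) (X : Set α) : ℤ :=
  ((sSup (Set.ncard '' {I | M.Indep I ∧ I ⊆ X}) : ℕ) : ℤ)

/-- The connectivity function `λ_M(X) = r(X) + r(E − X) − r(M)`. -/
noncomputable def lam (M : Matroid α) (X : Set α) : ℤ :=
  r M X + r M (M.E \ X) - r M M.E

/-- Local connectivity `⊓(X,Y) = r(X) + r(Y) − r(X ∪ Y)`. -/
noncomputable def localConn (M : Matroid α) (X Y : Set α) : ℤ :=
  r M X + r M Y - r M (X ∪ Y)

/-- A circuit: a minimal dependent set. -/
def Circuit (M : Matroid α) (C : Set α) : Prop :=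
  C ⊆ M.E ∧ ¬ M.Indep C ∧ ∀ D, D ⊂ C → M.Indep D

/-- A cocircuit: a circuit of the dual. -/
def Cocircuit (M : Matroid α) (C : Set α) : Prop := Circuit M✶ C

/-- A triangle: a 3-element circuit. -/
def Triangle (M : Matroid α) (T : Set α) : Prop := Circuit M T ∧ T.ncard = 3

/-- A triad: a 3-element cocircuit. -/
def Triad (M : Matroid α) (T : Set α) : Prop := Cocircuit M T ∧ T.ncard = 3

/-- A quad: a 4-element set that is both a circuit and a cocircuit. -/
def Quad (M : Matroid α) (Q : Set α) : Prop :=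
  Circuit M Q ∧ Cocircuit M Q ∧ Q.ncard = 4

/-- Deletion of a set of elements. -/
def Del (M : Matroid α) (D : Set α) : Matroid α := M ↾ (M.E \ D)

/-- Contraction of a set of elements. -/
def Con (M : Matroid α) (C : Set α) : Matroid α := (M✶ ↾ (M.E \ C))✶

/-- `M` is 3-connected: it has no `k`-separation for `k = 1, 2`, where a
`k`-separation is a set `X` with `λ(X) = k − 1`, `|X| ≥ k` and `|E − X| ≥ k`. -/
def ThreeConnected (M : Matroid α) : Prop :=
  ∀ k : ℕ, 0 < k → k < 3 → ∀ X ⊆ M.E,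
    ¬ (lam M X = (k : ℤ) - 1 ∧ (k : ℤ) ≤ X.ncard ∧ (k : ℤ) ≤ (M.E \ X).ncard)

/-- A detachable pair: distinct elements `e, f` such that `M \ e \ f` or
`M / e / f` is 3-connected. -/
def DetachablePair (M : Matroid α) (e f : α) : Prop :=
  e ≠ f ∧ e ∈ M.E ∧ f ∈ M.E ∧
    (ThreeConnected (Del M {e, f}) ∨ ThreeConnected (Con M {e, f}))

/-- The triple of elements with indices `i, i+1, i+2` in an ordering. -/
def tri (e : ℕ → α) (i : ℕ) : Set α := {e i, e (i + 1), e (i + 2)}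

/-- `(e 0, …, e (n-1))` is a fan ordering of length `n ≥ 3` in `M`:
consecutive triples alternate between triangles and triads. -/
def FanOrd (M : Matroid α) (n : ℕ) (e : ℕ → α) : Prop :=
  3 ≤ n ∧ Set.InjOn e (Set.Iio n) ∧ (∀ i < n, e i ∈ M.E) ∧
    (Triangle M (tri e 0) ∨ Triad M (tri e 0)) ∧
    ∀ i, i + 3 < n →
      (Triangle M (tri e i) → Triad M (tri e (i + 1))) ∧
      (Triad M (tri e i) → Triangle M (tri e (i + 1)))

/-- A fan (as a set): either a 2-element subset of the ground set, or the
underlying set of a fan ordering of length at least 3. -/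
def IsFan (M : Matroid α) (F : Set α) : Prop :=
  (F ⊆ M.E ∧ F.ncard = 2) ∨ ∃ n e, FanOrd M n e ∧ F = e '' Set.Iio n

/-- A maximal fan: a fan contained in no strictly larger fan. -/
def MaximalFan (M : Matroid α) (F : Set α) : Prop :=
  IsFan M F ∧ ∀ F', IsFan M F' → F ⊆ F' → F' = F

/-- `M` is a wheel or a whirl: its ground set has a cyclic ordering of even size
`2n` in which consecutive triples alternate between triangles and triads. -/
def IsWheelOrWhirl (M : Matroid α) : Prop :=
  ∃ (n : ℕ) (e : ℕ → α), 2 ≤ n ∧ Set.InjOn e (Set.Iio (2 * n)) ∧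
    M.E = e '' Set.Iio (2 * n) ∧
    ∀ i < 2 * n,
      (i % 2 = 0 → Triangle M {e i, e ((i + 1) % (2 * n)), e ((i + 2) % (2 * n))}) ∧
      (i % 2 = 1 → Triad M {e i, e ((i + 1) % (2 * n)), e ((i + 2) % (2 * n))})

/-- An `M(K₄)`-separator: a 6-element set `{a,b,c,x,y,z}` where `{x,y,z}` is a
triad and `{a,b,c}`, `{a,x,y}`, `{b,x,z}`, `{c,y,z}` are triangles. -/
def MK4Sep (M : Matroid α) (S : Set α) : Prop :=
  ∃ a b c x y z : α, S = {a, b, c, x, y, z} ∧ S.ncard = 6 ∧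
    Triad M {x, y, z} ∧ Triangle M {a, b, c} ∧ Triangle M {a, x, y} ∧
    Triangle M {b, x, z} ∧ Triangle M {c, y, z}

/-- A vertical 3-separation `(X, {e}, Y)` of `M`. -/
def VertThreeSep (M : Matroid α) (X : Set α) (e : α) (Y : Set α) : Prop :=
  X ∪ {e} ∪ Y = M.E ∧ Disjoint X Y ∧ e ∉ X ∧ e ∉ Y ∧
    lam M X = 2 ∧ lam M Y = 2 ∧ e ∈ M.closure X ∧ e ∈ M.closure Y ∧
    3 ≤ r M X ∧ 3 ≤ r M Y

/-- `N` is a simplification of `M`: a restriction of `M` to a set of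
representatives, one from each parallel class of nonloops. -/
def SimplificationOf (M N : Matroid α) : Prop :=
  ∃ X : Set α, (∀ x ∈ X, x ∈ M.E ∧ x ∉ M.closure ∅) ∧ N = M ↾ X ∧
    ∀ y ∈ M.E, y ∉ M.closure ∅ →
      ∃! x, x ∈ X ∧ M.closure {y} = M.closure {x}


/-!
The triangles of a fan put every other element in the closure of the two before it, so
`r(F) ≤ ⌊|F|/2⌋ + 1`, and dually the triads give `r*(F) ≤ ⌈|F|/2⌉ + 1`. The two bounds add up
to `|F| + 2`, while `λ(F) = r(F) + r*(F) - |F|` is at least `2` by 3-connectivity, so both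
bounds are attained and `λ(F) = 2`.
-/

section Rank

variable {M : Matroid α} {X : Set α} {x : α}

lemma r_eq_toNat_eRk (M : Matroid α) [M.RankFinite] (X : Set α) :
    r M X = (M.eRk X).toNat := by
  obtain ⟨I, hI⟩ := M.exists_isBasis' X
  have hmax : IsGreatest (ncard '' {J | M.Indep J ∧ J ⊆ X}) (M.eRk X).toNat := by
    refine ⟨⟨I, ⟨hI.indep, hI.subset⟩, by rw [ncard_def, hI.encard_eq_eRk]⟩, ?_⟩
    rintro _ ⟨J, ⟨hJ, hJX⟩, rfl⟩
    exact ENat.toNat_le_toNat (hJ.encard_le_eRk_of_subset hJX)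
      (eRk_ne_top_iff.2 (M.isRkFinite_set X))
  rw [r, hmax.csSup_eq]

lemma r_insert_of_mem_closure [M.RankFinite] (h : x ∈ M.closure X) :
    r M (insert x X) = r M X := by
  rw [r_eq_toNat_eRk, r_eq_toNat_eRk, ← eRk_insert_closure_eq, insert_eq_of_mem h,
    eRk_closure_eq]

lemma r_empty (M : Matroid α) [M.RankFinite] : r M ∅ = 0 := by
  simp [r_eq_toNat_eRk]

lemma r_insert_le [M.RankFinite] (x : α) (X : Set α) : r M (insert x X) ≤ r M X + 1 := by
  have hX := eRk_ne_top_iff.2 (M.isRkFinite_set X)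
  rw [r_eq_toNat_eRk, r_eq_toNat_eRk]
  exact_mod_cast (ENat.toNat_le_toNat (M.eRk_insert_le_add_one x X) (by simp [hX])).trans_eq
    (ENat.toNat_add hX ENat.one_ne_top)

lemma r_union_le [M.RankFinite] (X Y : Set α) : r M (X ∪ Y) ≤ r M X + r M Y := by
  have hX := eRk_ne_top_iff.2 (M.isRkFinite_set X)
  have hY := eRk_ne_top_iff.2 (M.isRkFinite_set Y)
  rw [r_eq_toNat_eRk, r_eq_toNat_eRk, r_eq_toNat_eRk]
  exact_mod_cast (ENat.toNat_le_toNat (M.eRk_union_le_eRk_add_eRk X Y)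
    (WithTop.add_ne_top.2 ⟨hX, hY⟩)).trans_eq (ENat.toNat_add hX hY)

lemma r_dual [M.Finite] (hX : X ⊆ M.E) : r M✶ X = X.ncard + r M (M.E \ X) - r M M.E := by
  have h := congrArg ENat.toNat (M.eRk_dual_add_eRank X hX)
  rw [ENat.toNat_add (eRk_ne_top_iff.2 (M✶.isRkFinite_set X))
      (M.eRank_ne_top_iff.2 inferInstance),
    ENat.toNat_add (eRk_ne_top_iff.2 (M.isRkFinite_set _))
      (encard_ne_top_iff.2 (M.ground_finite.subset hX)),
    ← eRk_ground] at h
  rw [r_eq_toNat_eRk, r_eq_toNat_eRk, r_eq_toNat_eRk, ncard_def]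
  omega

lemma lam_eq_r_add_r_dual [M.Finite] (hX : X ⊆ M.E) : lam M X = r M X + r M✶ X - X.ncard := by
  rw [lam, r_dual hX]
  ring

lemma lam_dual [M.Finite] (hX : X ⊆ M.E) : lam M✶ X = lam M X := by
  rw [lam_eq_r_add_r_dual hX, lam_eq_r_add_r_dual (M := M✶) hX, dual_dual]
  ring

lemma lam_nonneg [M.Finite] (hX : X ⊆ M.E) : 0 ≤ lam M X := by
  have h := r_union_le (M := M) X (M.E \ X)
  rw [union_sdiff_cancel hX] at h
  rw [lam]
  omega

end Rank

section Connectivity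

variable {M : Matroid α} {X : Set α}

lemma ThreeConnected.dual [M.Finite] (hM : ThreeConnected M) : ThreeConnected M✶ := by
  intro k hk hk3 X hX
  rw [lam_dual (M := M) hX]
  exact hM k hk hk3 X hX

lemma ThreeConnected.two_le_lam [M.Finite] (hM : ThreeConnected M) (hX : X ⊆ M.E)
    (h1 : 2 ≤ X.ncard) (h2 : 2 ≤ (M.E \ X).ncard) : 2 ≤ lam M X := by
  by_contra! hlt
  obtain h | h : lam M X = 0 ∨ lam M X = 1 := by have := lam_nonneg hX; omega
  · exact hM 1 one_pos (by norm_num) X hX ⟨by rw [h]; norm_num, by omega, by omega⟩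
  · exact hM 2 two_pos (by norm_num) X hX ⟨by rw [h]; norm_num, by omega, by omega⟩

end Connectivity

section Fan

variable {M : Matroid α} {n : ℕ} {e : ℕ → α}

lemma Circuit.mem_closure_sdiff {C : Set α} {x : α} (hC : Circuit M C) (hx : x ∈ C) :
    x ∈ M.closure (C \ {x}) :=
  (isCircuit_iff_forall_ssubset.2 ⟨dep_iff.2 ⟨hC.2.1, hC.1⟩, hC.2.2⟩)
    |>.mem_closure_sdiff_singleton_of_mem hx

lemma triangle_dual_iff {T : Set α} : Triangle M✶ T ↔ Triad M T := Iff.rfl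

lemma triad_dual_iff {T : Set α} : Triad M✶ T ↔ Triangle M T := by
  rw [Triad, Cocircuit, dual_dual, Triangle]

lemma image_Iio_add_one (e : ℕ → α) (m : ℕ) :
    e '' Iio (m + 1) = insert (e m) (e '' Iio m) := by
  rw [← image_insert_eq, ← Order.Iio_succ_eq_insert, Nat.succ_eq_succ]

lemma r_image_Iio_le {N : Matroid α} [N.RankFinite] {p : ℕ} (hp : p < 2) (hn : 2 ≤ n)
    (hcirc : ∀ i, i + 2 < n → i % 2 = p → Circuit N (tri e i)) :
    r N (e '' Iio n) ≤ ((n + p) / 2 : ℕ) + 1 := by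
  suffices h : ∀ m, m + 2 ≤ n → r N (e '' Iio (m + 2)) ≤ ((m + 2 + p) / 2 : ℕ) + 1 by
    simpa [Nat.sub_add_cancel hn] using h (n - 2) (by omega)
  intro m hm
  induction m with
  | zero =>
    calc r N (e '' Iio 2) ≤ r N (e '' Iio 0) + 1 + 1 := by
          rw [image_Iio_add_one, image_Iio_add_one]
          exact (r_insert_le _ _).trans (add_le_add_left (r_insert_le _ _) 1)
      _ ≤ _ := by simp [r_empty]; omega
  | succ m ih =>
    have ih := ih (by omega)
    rw [show m + 1 + 2 = m + 2 + 1 by ring, image_Iio_add_one]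
    by_cases hpm : m % 2 = p
    · have hcl : e (m + 2) ∈ N.closure (e '' Iio (m + 2)) := by
        refine N.closure_subset_closure ?_
          ((hcirc m (by omega) hpm).mem_closure_sdiff (by simp [tri]))
        rintro _ ⟨rfl | rfl | rfl, hne⟩
        · exact mem_image_of_mem e (by simp)
        · exact mem_image_of_mem e (by simp)
        · exact (hne rfl).elim
      rw [r_insert_of_mem_closure hcl]
      omega
    · have := r_insert_le (M := N) (e (m + 2)) (e '' Iio (m + 2))
      omega

lemma FanOrd.image_subset_ground (hord : FanOrd M n e) : e '' Iio n ⊆ M.E := by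
  rintro _ ⟨j, hj, rfl⟩
  exact hord.2.2.1 j hj

lemma FanOrd.dual (hord : FanOrd M n e) : FanOrd M✶ n e := by
  obtain ⟨hn, hinj, hmem, h0, halt⟩ := hord
  refine ⟨hn, hinj, hmem, by rwa [triangle_dual_iff, triad_dual_iff, or_comm], fun i hi => ?_⟩
  rw [triangle_dual_iff, triad_dual_iff, triad_dual_iff, triangle_dual_iff]
  exact (halt i hi).symm

lemma FanOrd.triangle_triad_of_triangle (hord : FanOrd M n e) (h0 : Triangle M (tri e 0))
    {i : ℕ} (hi : i + 2 < n) :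
    (i % 2 = 0 → Triangle M (tri e i)) ∧ (i % 2 = 1 → Triad M (tri e i)) := by
  induction i with
  | zero => exact ⟨fun _ => h0, by omega⟩
  | succ i ih =>
    have ih := ih (by omega)
    have halt := hord.2.2.2.2 i (by omega)
    exact ⟨fun _ => halt.2 (ih.2 (by omega)), fun _ => halt.1 (ih.1 (by omega))⟩

lemma FanOrd.r_r_dual_lam_of_triangle [M.Finite] (hM : ThreeConnected M) (hord : FanOrd M n e)
    (hcard : (e '' Iio n).ncard + 2 ≤ M.E.ncard) (h0 : Triangle M (tri e 0)) :
    r M (e '' Iio n) = (n / 2 : ℕ) + 1 ∧ r M✶ (e '' Iio n) = ((n + 1) / 2 : ℕ) + 1 ∧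
      lam M (e '' Iio n) = 2 := by
  have hn : 3 ≤ n := hord.1
  have hFE := hord.image_subset_ground
  have hFn : (e '' Iio n).ncard = n := by rw [hord.2.1.ncard_image, ncard_Iio_nat]
  have hr : r M (e '' Iio n) ≤ (n / 2 : ℕ) + 1 :=
    r_image_Iio_le (p := 0) (by omega) (by omega)
      fun i hi hp => ((hord.triangle_triad_of_triangle h0 hi).1 hp).1
  have hr' : r M✶ (e '' Iio n) ≤ ((n + 1) / 2 : ℕ) + 1 :=
    r_image_Iio_le (p := 1) (by omega) (by omega)
      fun i hi hp => ((hord.triangle_triad_of_triangle h0 hi).2 hp).1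
  have hlam : 2 ≤ lam M (e '' Iio n) := by
    have := ncard_sdiff_add_ncard_of_subset hFE M.ground_finite
    exact hM.two_le_lam hFE (by omega) (by omega)
  have := lam_eq_r_add_r_dual hFE
  rw [hFn] at this
  omega

end Fan

/-- Rank, corank and connectivity of a fan of length at least 3 in a
3-connected matroid with at least two elements outside the fan. -/
theorem stmt5 (M : Matroid α) [M.Finite] (hM : ThreeConnected M)
    {n : ℕ} {e : ℕ → α} {F : Set α} (hord : FanOrd M n e) (hF : F = e '' Set.Iio n)
    (hcard : F.ncard + 2 ≤ M.E.ncard) :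
    (Triangle M {e 0, e 1, e 2} →
      r M F = (n / 2 : ℕ) + 1 ∧ r M✶ F = ((n + 1) / 2 : ℕ) + 1) ∧
    (Triad M {e 0, e 1, e 2} →
      r M F = ((n + 1) / 2 : ℕ) + 1 ∧ r M✶ F = (n / 2 : ℕ) + 1) ∧
    lam M F = 2 := by
  subst hF
  have of_triangle (h0 : Triangle M (tri e 0)) :=
    hord.r_r_dual_lam_of_triangle hM hcard h0
  have of_triad (h0 : Triad M (tri e 0)) : r M (e '' Iio n) = ((n + 1) / 2 : ℕ) + 1 ∧
      r M✶ (e '' Iio n) = (n / 2 : ℕ) + 1 ∧ lam M (e '' Iio n) = 2 := by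
    obtain ⟨hr', hr, hlam⟩ := hord.dual.r_r_dual_lam_of_triangle hM.dual hcard h0
    rw [dual_dual] at hr
    rw [lam_dual hord.image_subset_ground] at hlam
    exact ⟨hr, hr', hlam⟩
  refine ⟨fun h0 => (of_triangle h0).imp_right And.left,
    fun h0 => (of_triad h0).imp_right And.left, ?_⟩
  rcases hord.2.2.2.1 with h0 | h0
  exacts [(of_triangle h0).2.2, (of_triad h0).2.2]
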